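/- Let S ⊆ T be a subspace and let Ω : S × S → ⋀^{p−1} T* be a bilinear map with Ω(X,Y) = −Ω(Y,X) for all X, Y ∈ S. Then the following are equivalent: (i) there exists a linear map η : S → ⋀^p T* such that (η X)(Y, v₁, …, v_{p−1}) = Ω(X,Y)(v₁, …, v_{p−1}) for all X, Y ∈ S and all v₁, …, v_{p−1} ∈ T; (ii) there exists an alternating (p+1)-form ω ∈ ⋀^{p+1} T* such that ω(X, Y, v₁, …, v_{p−1}) = Ω(X,Y)(v₁, …, v_{p−1}) for all X, Y ∈ S and all v₁, …, v_{p−1} ∈ T. -/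

import Mathlib

/-!
Induction on a finite spanning set of `S`. Suppose `ω` works for `S` and `e ∉ S`, and pick a
functional `φ` with `φ e = 1` vanishing on `S`. Skew-symmetry makes the defect
`α = η e - ι_e ω` satisfy `ι_e α = 0` and `ι_Y α = 0` for `Y ∈ S`, and then
`ω + φ ∧ α` works for `S + K e`, because `ι_x (φ ∧ α) = φ x • α` whenever `ι_x α = 0`.
Here `ι_x` is `curryLeft` and `φ ∧ α` is `alternatizeUncurryFin (φ.smulRight α)`.
-/

namespace AlternatingMap

variable {R M N : Type*} [CommRing R] [AddCommGroup M] [Module R M] [AddCommGroup N] [Module R N]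
  {n : ℕ}

theorem curryLeft_curryLeft_swap (f : M [⋀^Fin (n + 2)]→ₗ[R] N) (x y : M) :
    (f.curryLeft x).curryLeft y = -(f.curryLeft y).curryLeft x := by
  ext v
  simp only [curryLeft_apply_apply, neg_apply]
  rw [← f.map_swap _ (zero_ne_one : (0 : Fin (n + 2)) ≠ 1), Matrix.cons_cons_comp_swap_zero_one]

theorem curryLeft_alternatizeUncurryFin_apply (f : M →ₗ[R] M [⋀^Fin (n + 1)]→ₗ[R] N) (x : M)
    (v : Fin (n + 1) → M) :
    (alternatizeUncurryFin f).curryLeft x v =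
      f x v - ∑ i : Fin (n + 1), (-1) ^ (i : ℕ) • f (v i) (Matrix.vecCons x (i.removeNth v)) := by
  have hremove (i : Fin (n + 1)) :
      i.succ.removeNth (Matrix.vecCons x v) = Matrix.vecCons x (i.removeNth v) :=
    Fin.cons_comp_succ_succAbove x v i
  simp [alternatizeUncurryFin_apply, Fin.sum_univ_succ, pow_succ, hremove, sub_eq_add_neg,
    Finset.sum_neg_distrib]

theorem curryLeft_alternatizeUncurryFin_smulRight (φ : M →ₗ[R] R)
    (α : M [⋀^Fin (n + 1)]→ₗ[R] N) {x : M} (hx : α.curryLeft x = 0) :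
    (alternatizeUncurryFin (φ.smulRight α)).curryLeft x = φ x • α := by
  refine AlternatingMap.ext fun v => ?_
  have hα (w : Fin n → M) : α (Matrix.vecCons x w) = 0 := by
    rw [← curryLeft_apply_apply, hx, zero_apply]
  rw [curryLeft_alternatizeUncurryFin_apply]
  simp [hα]

end AlternatingMap

open AlternatingMap

namespace Submodule

section CommRing

variable {R M N : Type*} [CommRing R] [AddCommGroup M] [Module R M] [AddCommGroup N] [Module R N]
  {n : ℕ} {S : Submodule R M}

theorem curryLeft_eq_neg_curryLeft_of_curryLeft_self_eq_zero
    {η : S →ₗ[R] M [⋀^Fin (n + 1)]→ₗ[R] N} (hη : ∀ X : S, (η X).curryLeft X = 0) (X Y : S) :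
    (η X).curryLeft Y = -(η Y).curryLeft X := by
  have h := hη (X + Y)
  simp only [map_add, curryLeft_add, LinearMap.add_apply, coe_add] at h
  rw [hη X, hη Y, zero_add, add_zero] at h
  exact eq_neg_of_add_eq_zero_right h

def ContractionsExtend (n : ℕ) (N : Type*) [AddCommGroup N] [Module R N] (S : Submodule R M) :
    Prop :=
  ∀ η : S →ₗ[R] M [⋀^Fin (n + 1)]→ₗ[R] N, (∀ X : S, (η X).curryLeft X = 0) →
    ∃ ω : M [⋀^Fin (n + 2)]→ₗ[R] N, ∀ X : S, ω.curryLeft X = η X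

theorem contractionsExtend_bot (n : ℕ) : (⊥ : Submodule R M).ContractionsExtend n N := by
  intro η _
  refine ⟨0, fun X => ?_⟩
  rw [Subsingleton.elim X 0]
  simp

end CommRing

variable {K V N : Type*} [Field K] [AddCommGroup V] [Module K V] [AddCommGroup N] [Module K N]
  {n : ℕ} {S : Submodule K V}

theorem ContractionsExtend.sup_span_singleton (hS : S.ContractionsExtend n N) (e : V) :
    (S ⊔ K ∙ e).ContractionsExtend n N := by
  by_cases he : e ∈ S
  · rwa [sup_eq_left.mpr ((span_singleton_le_iff_mem e S).mpr he)]
  intro η hη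
  obtain ⟨φ, hφS, hφe⟩ := LinearMap.exists_extend_of_notMem (0 : S →ₗ[K] K) he 1
  replace hφS (Y : S) : φ Y = 0 := LinearMap.congr_fun hφS Y
  let incl := inclusion (le_sup_left : S ≤ S ⊔ K ∙ e)
  obtain ⟨ω, hω⟩ : ∃ ω : V [⋀^Fin (n + 2)]→ₗ[K] N, ∀ X : S, ω.curryLeft X = η (incl X) :=
    hS (η ∘ₗ incl) fun X => hη (incl X)
  let E : ↥(S ⊔ K ∙ e) := ⟨e, mem_sup_right (mem_span_singleton_self e)⟩
  let α := η E - ω.curryLeft e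
  have hα (x : V) : α.curryLeft x = (η E).curryLeft x - (ω.curryLeft e).curryLeft x :=
    congr($(map_sub curryLeftLinearMap (η E) (ω.curryLeft e)) x)
  have hαe : α.curryLeft e = 0 := by
    rw [hα, curryLeft_same, sub_zero]
    exact hη E
  have hαS (Y : S) : α.curryLeft Y = 0 := by
    rw [hα, curryLeft_curryLeft_swap ω e, hω, sub_neg_eq_add]
    exact eq_neg_iff_add_eq_zero.mp
      (curryLeft_eq_neg_curryLeft_of_curryLeft_self_eq_zero hη E (incl Y))
  let ω' := ω + alternatizeUncurryFin (φ.smulRight α)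
  have hω'S (Y : S) : ω'.curryLeft Y = η (incl Y) := by
    rw [curryLeft_add, LinearMap.add_apply, hω,
      curryLeft_alternatizeUncurryFin_smulRight φ α (hαS Y), hφS Y, zero_smul, add_zero]
  have hω'e : ω'.curryLeft e = η E := by
    rw [curryLeft_add, LinearMap.add_apply, curryLeft_alternatizeUncurryFin_smulRight φ α hαe,
      hφe, one_smul, add_sub_cancel]
  refine ⟨ω', fun X => ?_⟩
  obtain ⟨Y, hY, _, hc, hX⟩ := mem_sup.mp X.2
  obtain ⟨c, rfl⟩ := mem_span_singleton.mp hc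
  obtain rfl : X = incl ⟨Y, hY⟩ + c • E := Subtype.ext hX.symm
  rw [map_add, map_smul, coe_add, coe_smul, map_add, map_smul]
  exact congr($(hω'S ⟨Y, hY⟩) + c • $hω'e)

theorem FG.contractionsExtend (hS : S.FG) : S.ContractionsExtend n N := by
  classical
  obtain ⟨s, rfl⟩ := hS
  induction s using Finset.induction_on with
  | empty => simpa using contractionsExtend_bot n
  | insert e s _ ih =>
    rw [Finset.coe_insert, span_insert, sup_comm]
    exact ih.sup_span_singleton e

end Submodule

open Module

theorem stmt5 {T : Type} [AddCommGroup T] [Module ℝ T] [FiniteDimensional ℝ T]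
    (q : ℕ) (S : Submodule ℝ T)
    (Ω : S →ₗ[ℝ] S →ₗ[ℝ] (T [⋀^Fin q]→ₗ[ℝ] ℝ))
    (hskew : ∀ X Y : S, Ω X Y = -(Ω Y X)) :
    (∃ η : S →ₗ[ℝ] (T [⋀^Fin (q+1)]→ₗ[ℝ] ℝ),
      ∀ (X Y : S) (v : Fin q → T),
        ((η X).curryLeft (Y : T)) v = (Ω X Y) v) ↔
    (∃ ω : T [⋀^Fin (q+2)]→ₗ[ℝ] ℝ,
      ∀ (X Y : S) (v : Fin q → T),
        ((ω.curryLeft (X : T)).curryLeft (Y : T)) v = (Ω X Y) v) := by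
  constructor
  · rintro ⟨η, hη⟩
    have hΩ (X : S) (v : Fin q → T) : Ω X X v = 0 :=
      self_eq_neg.mp (congr($(hskew X X) v).trans (AlternatingMap.neg_apply _ _))
    obtain ⟨ω, hω⟩ := (IsNoetherian.noetherian S).contractionsExtend η fun X =>
      AlternatingMap.ext fun v => (hη X X v).trans (hΩ X v)
    exact ⟨ω, fun X Y v => by rw [hω, hη]⟩
  · rintro ⟨ω, hω⟩
    exact ⟨ω.curryLeft ∘ₗ S.subtype, hω⟩
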